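/- Let V be a finite-dimensional real vector space and Γ ⊆ V a countable set of vectors such that no two distinct elements of Γ are parallel (if γ, γ' ∈ Γ and γ = tγ' for some t ∈ ℝ then γ = γ'), and such that Γ is contained in an open half-space {v ∈ V : ℓ(v) > 0} for some linear functional ℓ : V → ℝ. Then there exists a charge c : V → ℂ for Γ such that the arguments arg(c(γ)) for γ ∈ Γ are pairwise distinct; consequently the induced preorder ⪰_c (α ⪰_c β iff arg(c(α)) ≥ arg(c(β))) is a convex total order on Γ. -/

import Mathlib

open scoped BigOperators

variable {V : Type*} [AddCommGroup V] [Module ℝ V]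

/-- The set of finite nonnegative real linear combinations of elements of `S`. -/
def coneR (S : Set V) : Set V :=
  {x | ∃ (n : ℕ) (c : Fin n → ℝ) (v : Fin n → V),
    (∀ i, 0 ≤ c i) ∧ (∀ i, v i ∈ S) ∧ x = ∑ i, c i • v i}

/-- The set of finite nonnegative integer linear combinations of elements of `S`. -/
def coneZ (S : Set V) : Set V :=
  {x | ∃ (n : ℕ) (c : Fin n → ℕ) (v : Fin n → V),
    (∀ i, v i ∈ S) ∧ x = ∑ i, (c i : ℝ) • v i}

/-- The strict part of a relation `le`. -/
def sLT (le : V → V → Prop) (a b : V) : Prop := le a b ∧ ¬ le b a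

/-- The equivalence class of `α` inside `Γ` for the preorder `le`. -/
def eqCls (Γ : Set V) (le : V → V → Prop) (α : V) : Set V :=
  {β | β ∈ Γ ∧ le α β ∧ le β α}

/-- `le` is a total preorder on `Γ`. -/
structure IsTotalPreorderOn (Γ : Set V) (le : V → V → Prop) : Prop where
  refl : ∀ a ∈ Γ, le a a
  trans : ∀ a ∈ Γ, ∀ b ∈ Γ, ∀ c ∈ Γ, le a b → le b c → le a c
  total : ∀ a ∈ Γ, ∀ b ∈ Γ, le a b ∨ le b a

/-- `le` is a convex total preorder on `Γ` (Definition 1.5 of the paper). -/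
def IsConvexPreorder (Γ : Set V) (le : V → V → Prop) : Prop :=
  IsTotalPreorderOn Γ le ∧
  ∀ α ∈ Γ,
    (∀ a ∈ coneR (eqCls Γ le α), ∀ x ∈ coneZ {β | β ∈ Γ ∧ sLT le α β}, x ≠ 0 →
        a + x ∉ coneZ {β | β ∈ Γ ∧ le β α}) ∧
    (∀ a ∈ coneR (eqCls Γ le α), ∀ x ∈ coneZ {β | β ∈ Γ ∧ sLT le β α}, x ≠ 0 →
        a + x ∉ coneZ {β | β ∈ Γ ∧ le α β})

/-- `le` is a convex total order on `Γ`: a convex total preorder that is antisymmetric on `Γ`. -/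
def IsConvexOrder (Γ : Set V) (le : V → V → Prop) : Prop :=
  IsConvexPreorder Γ le ∧ ∀ a ∈ Γ, ∀ b ∈ Γ, le a b → le b a → a = b

/-!
Choose a functional `g` vanishing on none of the countably many vectors `ℓ γ' • γ - ℓ γ • γ'`
(`γ ≠ γ'` in `Γ`); they are nonzero because no two elements of `Γ` are parallel, and a finite
dimensional real space is not a countable union of proper subspaces (Baire). For the charge
`c = g + i ℓ` one has `Im (conj (c γ) * c γ') = g (ℓ γ' • γ - ℓ γ • γ')`, so distinct elements of
`Γ` get distinct arguments.

For any charge `c` and `α ∈ Γ`, the sign of the linear functional `v ↦ Im (conj (c α) * c v)`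
compares `arg (c v)` with `arg (c α)`. It vanishes on the class of `α`, is positive above it and
nonpositive at or below it, hence it separates the cones occurring in the convexity condition.
-/

open ComplexConjugate

theorem Submodule.exists_forall_notMem_of_countable {𝕜 E ι : Type*} [NontriviallyNormedField 𝕜]
    [CompleteSpace 𝕜] [AddCommGroup E] [Module 𝕜 E] [FiniteDimensional 𝕜 E] [Countable ι]
    (p : ι → Submodule 𝕜 E) (hp : ∀ i, p i ≠ ⊤) : ∃ x, ∀ i, x ∉ p i := by
  let e := (Module.finBasis 𝕜 E).equivFun
  by_contra! hcover
  have hunion : ⋃ i, ((p i).map e.toLinearMap : Set (Fin (Module.finrank 𝕜 E) → 𝕜)) =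
      Set.univ :=
    Set.eq_univ_of_forall fun y => by
      obtain ⟨i, hi⟩ := hcover (e.symm y)
      exact Set.mem_iUnion.2 ⟨i, (Submodule.mem_map_equiv _).2 hi⟩
  obtain ⟨i, hi⟩ := nonempty_interior_of_iUnion_of_closed
    (fun i => Submodule.closed_of_finiteDimensional _) hunion
  exact hp i (by simpa using Submodule.eq_top_of_nonempty_interior' _ hi)

theorem Module.exists_dual_forall_apply_ne_zero_of_countable {𝕜 E ι : Type*}
    [NontriviallyNormedField 𝕜] [CompleteSpace 𝕜] [AddCommGroup E] [Module 𝕜 E]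
    [FiniteDimensional 𝕜 E] [Countable ι] (v : ι → E) (hv : ∀ i, v i ≠ 0) :
    ∃ f : Dual 𝕜 E, ∀ i, f (v i) ≠ 0 := by
  obtain ⟨f, hf⟩ := Submodule.exists_forall_notMem_of_countable
    (fun i => LinearMap.ker (Dual.eval 𝕜 E (v i))) fun i htop => hv i <|
      (forall_dual_apply_eq_zero_iff 𝕜 (v i)).1 <|
        LinearMap.congr_fun (LinearMap.ker_eq_top.1 htop)
  exact ⟨f, fun i => by simpa using hf i⟩

namespace Complex

theorem im_conj_mul_eq_norm_mul_sin {u z : ℂ} (hu : u ≠ 0) (hz : z ≠ 0) :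
    (conj u * z).im = ‖u‖ * ‖z‖ * Real.sin (z.arg - u.arg) := by
  rw [Real.sin_sub, sin_arg, cos_arg hu, sin_arg, cos_arg hz]
  simp only [mul_im, conj_re, conj_im]
  field_simp
  ring

theorem arg_lt_arg_iff_im_conj_mul_pos {u z : ℂ} (hu : 0 < u.im) (hz : 0 < z.im) :
    u.arg < z.arg ↔ 0 < (conj u * z).im := by
  have hu0 : u ≠ 0 := fun h => by simp [h] at hu
  have hz0 : z ≠ 0 := fun h => by simp [h] at hz
  have hu₁ := arg_nonneg_iff.2 hu.le
  have hz₁ := arg_nonneg_iff.2 hz.le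
  have hu₂ := arg_lt_pi_iff.2 (Or.inr hu.ne')
  have hz₂ := arg_lt_pi_iff.2 (Or.inr hz.ne')
  rw [im_conj_mul_eq_norm_mul_sin hu0 hz0, mul_pos_iff_of_pos_left (by positivity)]
  constructor
  · intro h
    exact Real.sin_pos_of_pos_of_lt_pi (by linarith) (by linarith)
  · contrapose!
    intro h
    exact Real.sin_nonpos_of_nonpos_of_neg_pi_le (by linarith) (by linarith)

theorem im_conj_mul_swap (u z : ℂ) : (conj z * u).im = -(conj u * z).im := by
  simp only [mul_im, conj_re, conj_im]
  ring

theorem arg_le_arg_iff_im_conj_mul_nonneg {u z : ℂ} (hu : 0 < u.im) (hz : 0 < z.im) :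
    u.arg ≤ z.arg ↔ 0 ≤ (conj u * z).im := by
  rw [← not_lt, arg_lt_arg_iff_im_conj_mul_pos hz hu, im_conj_mul_swap, neg_pos, not_lt]

theorem arg_eq_arg_iff_im_conj_mul_eq_zero {u z : ℂ} (hu : 0 < u.im) (hz : 0 < z.im) :
    u.arg = z.arg ↔ (conj u * z).im = 0 := by
  rw [le_antisymm_iff, arg_le_arg_iff_im_conj_mul_nonneg hu hz,
    arg_le_arg_iff_im_conj_mul_nonneg hz hu, im_conj_mul_swap u z, neg_nonneg, and_comm,
    ← le_antisymm_iff]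

end Complex

theorem smul_sub_smul_ne_zero {K M : Type*} [Field K] [AddCommGroup M] [Module K M]
    {a b : K} {x y : M} (ha : a ≠ 0) (hxy : ∀ t : K, x ≠ t • y) : a • x - b • y ≠ 0 := by
  intro h
  apply hxy (a⁻¹ * b)
  rw [mul_smul, ← sub_eq_zero.1 h, inv_smul_smul₀ ha]

theorem coneZ_subset_coneR (S : Set V) : coneZ S ⊆ coneR S := by
  rintro x ⟨n, c, v, hv, rfl⟩
  exact ⟨n, fun i => c i, v, fun i => (c i).cast_nonneg, hv, rfl⟩

theorem map_nonneg_of_mem_coneR {S : Set V} {f : V →ₗ[ℝ] ℝ} (hf : ∀ v ∈ S, 0 ≤ f v) {x : V}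
    (hx : x ∈ coneR S) : 0 ≤ f x := by
  obtain ⟨n, c, v, hc, hv, rfl⟩ := hx
  simp only [map_sum, map_smul, smul_eq_mul]
  exact Finset.sum_nonneg fun i _ => mul_nonneg (hc i) (hf _ (hv i))

theorem map_pos_of_mem_coneR {S : Set V} {f : V →ₗ[ℝ] ℝ} (hf : ∀ v ∈ S, 0 < f v) {x : V}
    (hx : x ∈ coneR S) (hx0 : x ≠ 0) : 0 < f x := by
  obtain ⟨n, c, v, hc, hv, rfl⟩ := hx
  obtain ⟨i, hi⟩ : ∃ i, c i ≠ 0 := by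
    by_contra! h
    exact hx0 (by simp [h])
  simp only [map_sum, map_smul, smul_eq_mul]
  exact Finset.sum_pos' (fun j _ => mul_nonneg (hc j) (hf _ (hv j)).le)
    ⟨i, Finset.mem_univ i, mul_pos ((hc i).lt_of_ne' hi) (hf _ (hv i))⟩

theorem add_notMem_coneZ_of_separating {A B C : Set V} (f : V →ₗ[ℝ] ℝ)
    (hA : ∀ v ∈ A, 0 ≤ f v) (hB : ∀ v ∈ B, 0 < f v) (hC : ∀ v ∈ C, f v ≤ 0) :
    ∀ a ∈ coneR A, ∀ x ∈ coneZ B, x ≠ 0 → a + x ∉ coneZ C := by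
  intro a ha x hx hx0 hax
  have hfa := map_nonneg_of_mem_coneR hA ha
  have hfx := map_pos_of_mem_coneR hB (coneZ_subset_coneR B hx) hx0
  have hfax := map_nonneg_of_mem_coneR (f := -f) (by simpa using hC) (coneZ_subset_coneR C hax)
  simp only [LinearMap.neg_apply, map_add] at hfax
  linarith

theorem isConvexPreorder_arg (Γ : Set V) (c : V →ₗ[ℝ] ℂ) (hc : ∀ γ ∈ Γ, 0 < (c γ).im) :
    IsConvexPreorder Γ (fun a b => (c a).arg ≤ (c b).arg) := by
  refine ⟨⟨fun _ _ => le_rfl, fun _ _ _ _ _ _ => le_trans, fun _ _ _ _ => le_total _ _⟩,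
    fun α hα => ?_⟩
  let f : V →ₗ[ℝ] ℝ := Complex.imLm ∘ₗ LinearMap.mulLeft ℝ (conj (c α)) ∘ₗ c
  have hle (β) (hβ : β ∈ Γ) : (c α).arg ≤ (c β).arg ↔ 0 ≤ f β :=
    Complex.arg_le_arg_iff_im_conj_mul_nonneg (hc α hα) (hc β hβ)
  have hlt (β) (hβ : β ∈ Γ) : (c α).arg < (c β).arg ↔ 0 < f β :=
    Complex.arg_lt_arg_iff_im_conj_mul_pos (hc α hα) (hc β hβ)
  constructor
  · refine add_notMem_coneZ_of_separating f ?_ ?_ ?_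
    · rintro β ⟨hβ, h, -⟩
      exact (hle β hβ).1 h
    · rintro β ⟨hβ, -, h⟩
      exact (hlt β hβ).1 (not_le.1 h)
    · rintro β ⟨hβ, h⟩
      exact not_lt.1 ((hlt β hβ).not.1 (not_lt.2 h))
  · refine add_notMem_coneZ_of_separating (-f) ?_ ?_ ?_
    · rintro β ⟨hβ, -, h⟩
      exact neg_nonneg.2 (not_lt.1 ((hlt β hβ).not.1 (not_lt.2 h)))
    · rintro β ⟨hβ, -, h⟩
      exact neg_pos.2 (not_le.1 ((hle β hβ).not.1 h))
    · rintro β ⟨hβ, h⟩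
      exact neg_nonpos.2 ((hle β hβ).1 h)

/-- Lemma 1.9: on a countable set of pairwise non-parallel vectors contained in an open
half-space, there is a charge with pairwise distinct arguments, and hence a convex total order. -/
theorem stmt3 [FiniteDimensional ℝ V] (Γ : Set V) (hΓ : Γ.Countable)
    (hpar : ∀ γ ∈ Γ, ∀ γ' ∈ Γ, ∀ t : ℝ, γ = t • γ' → γ = γ')
    (ℓ : V →ₗ[ℝ] ℝ) (hl : ∀ γ ∈ Γ, 0 < ℓ γ) :
    ∃ c : V →ₗ[ℝ] ℂ, (∀ γ ∈ Γ, 0 < (c γ).im) ∧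
      (∀ γ ∈ Γ, ∀ γ' ∈ Γ, γ ≠ γ' → (c γ).arg ≠ (c γ').arg) ∧
      IsConvexOrder Γ (fun a b => (c a).arg ≤ (c b).arg) := by
  have := hΓ.to_subtype
  obtain ⟨g, hg⟩ := Module.exists_dual_forall_apply_ne_zero_of_countable (𝕜 := ℝ)
    (fun p : {p : Γ × Γ // p.1 ≠ p.2} => ℓ p.1.2 • (p.1.1 : V) - ℓ p.1.1 • (p.1.2 : V))
    fun ⟨⟨γ, γ'⟩, hne⟩ => smul_sub_smul_ne_zero (hl γ' γ'.2).ne' fun t h =>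
      hne (Subtype.ext (hpar γ γ.2 γ' γ'.2 t h))
  let c : V →ₗ[ℝ] ℂ := Complex.equivRealProdLm.symm ∘ₗ g.prod ℓ
  have hre (v : V) : (c v).re = g v := rfl
  have him (v : V) : (c v).im = ℓ v := rfl
  have hc : ∀ γ ∈ Γ, 0 < (c γ).im := fun γ hγ => (him γ).symm ▸ hl γ hγ
  have hinj : ∀ γ ∈ Γ, ∀ γ' ∈ Γ, γ ≠ γ' → (c γ).arg ≠ (c γ').arg := by
    intro γ hγ γ' hγ' hne harg
    have hcross : (conj (c γ) * c γ').im = g (ℓ γ' • γ - ℓ γ • γ') := by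
      simp only [Complex.mul_im, Complex.conj_re, Complex.conj_im, hre, him, map_sub, map_smul,
        smul_eq_mul]
      ring
    exact hg ⟨(⟨γ, hγ⟩, ⟨γ', hγ'⟩), fun h => hne (congrArg Subtype.val h)⟩
      (hcross ▸ (Complex.arg_eq_arg_iff_im_conj_mul_eq_zero (hc γ hγ) (hc γ' hγ')).1 harg)
  exact ⟨c, hc, hinj, isConvexPreorder_arg Γ c hc,
    fun a ha b hb hab hba => not_imp_not.1 (hinj a ha b hb) (le_antisymm hab hba)⟩
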